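/- arXiv:0809.1379 — 2 statements merged into one kernel-verified Lean document; each statement's English description precedes it below -/
import Mathlib

section
/- Let V be a finite set of n ≥ 4 vertices carrying a random graph as in the context, let s ≠ t be vertices of V, let λ ∈ (0,1], and suppose that P(C_{a,b} = 1) ≥ λ for every unordered pair {a,b} of distinct vertices and that the random graph has the independence-in-cut property for (s,t). Let c_min = min over s-t cuts S of E[C(S)], and let C_{s;t} = min over s-t cuts S of C(S). Then for every real ε > 0, P( C_{s;t} ≤ (1−ε)·c_min ) ≤ 2·exp(−2·ε²·λ²·(n−2)) · (1 + exp(−ε²·λ²·(n−2)))^{n−2}. -/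
/-!
Every cut value is at least `c_min`, so on the event some `s`-`t` cut `S` has
`C(S) ≤ (1 - ε) E[C(S)]` (and `ε ≤ 1`, as cut values are nonnegative). By independence in the
cut and `E[C(S)] ≥ λ |S| |Sᶜ|`, Hoeffding's inequality bounds the probability of this by
`exp(-2 ε² λ² |S| |Sᶜ|)`, and a union bound sums this over all cuts. Writing `S = {s} ∪ T` with
`T ⊆ V ∖ {s, t}`, `|T| = j` and `N = n - 2`, one has `|S| |Sᶜ| ≥ N + N min(j, N - j) / 2`, so the
sum is dominated by `exp(-2ε²λ²N) ∑_T (r^|T| + r^(N - |T|))` with `r = exp(-ε²λ²N)`, which is the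
binomial expansion of `2 exp(-2ε²λ²N) (1 + r)^N`.
-/

open MeasureTheory ProbabilityTheory Finset

/-- The capacity of the cut determined by `S` (edges from `S` to its complement):
`C(S) = ∑_{a ∈ S, b ∉ S} C_{a,b}`. -/
noncomputable def cutCap {V Ω : Type*} [Fintype V] [DecidableEq V]
    (C : V → V → Ω → ℝ) (S : Finset V) (ω : Ω) : ℝ :=
  ∑ a ∈ S, ∑ b ∈ Sᶜ, C a b ω

/-- The independence-in-cut property for the pair `(s,t)`: for every `s`-`t` cut `S`,
the family of edge variables crossing the cut is mutually independent. -/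
def IndepInCut {V Ω : Type*} [Fintype V] [DecidableEq V] [MeasureSpace Ω]
    (C : V → V → Ω → ℝ) (s t : V) : Prop :=
  ∀ S : Finset V, s ∈ S → t ∉ S →
    iIndepFun
      (fun p : (S ×ˢ Sᶜ : Finset (V × V)) => C (p : V × V).1 (p : V × V).2) volume


open Real

lemma measureReal_sum_le_sum_integral_sub_le {Ω ι : Type*} {mΩ : MeasurableSpace Ω}
    {μ : Measure Ω} [IsProbabilityMeasure μ] {X : ι → Ω → ℝ} (h_indep : iIndepFun X μ)
    (h_meas : ∀ i, AEMeasurable (X i) μ) {a b : ℝ} (h_bdd : ∀ i, ∀ᵐ ω ∂μ, X i ω ∈ Set.Icc a b)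
    (s : Finset ι) {c : ℝ} (hc : 0 ≤ c) :
    μ.real {ω | ∑ i ∈ s, X i ω ≤ ∑ i ∈ s, μ[X i] - c}
      ≤ exp (-2 * c ^ 2 / (#s * (b - a) ^ 2)) := by
  have h_subG : ∀ i ∈ s, HasSubgaussianMGF (fun ω ↦ μ[X i] - X i ω) ((‖b - a‖₊ / 2) ^ 2) μ :=
    fun i _ ↦ by convert (hasSubgaussianMGF_of_mem_Icc (h_meas i) (h_bdd i)).neg using 1; ext; simp
  have h_indep' : iIndepFun (fun i ω ↦ μ[X i] - X i ω) μ :=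
    h_indep.comp (fun i y ↦ ∫ ω, X i ω ∂μ - y) fun _ ↦ measurable_const.sub measurable_id
  have h_tail := HasSubgaussianMGF.measure_sum_ge_le_of_iIndepFun h_indep' h_subG hc
  have h_param : ((∑ i ∈ s, (‖b - a‖₊ / 2) ^ 2 : NNReal) : ℝ) = #s * (b - a) ^ 2 / 4 := by
    simp [div_pow, sq_abs]
    ring
  rw [h_param] at h_tail
  convert h_tail using 2
  · ext ω
    simp only [Set.mem_ofPred_eq, Finset.sum_sub_distrib]
    constructor <;> intro h <;> linarith
  · generalize (#s : ℝ) * (b - a) ^ 2 = M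
    ring

lemma integral_eq_measureReal_of_zero_or_one {Ω : Type*} {mΩ : MeasurableSpace Ω}
    {μ : Measure Ω} {X : Ω → ℝ} (hX : Measurable X) (h01 : ∀ ω, X ω = 0 ∨ X ω = 1) :
    ∫ ω, X ω ∂μ = μ.real {ω | X ω = 1} := by
  have hA : MeasurableSet {ω | X ω = 1} := hX (measurableSet_singleton 1)
  rw [← integral_indicator_one hA]
  refine integral_congr_ae (ae_of_all _ fun ω ↦ ?_)
  rcases h01 ω with h | h <;> simp [h]

lemma mem_Icc_of_zero_or_one {x : ℝ} (h : x = 0 ∨ x = 1) : x ∈ Set.Icc (0 : ℝ) 1 := by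
  rcases h with rfl | rfl <;> simp

lemma exp_neg_two_mul_succ_mul_le {y N j : ℝ} (hy : 0 ≤ y) (hj : 0 ≤ j) (hjN : j ≤ N) :
    exp (-2 * y * ((j + 1) * (N + 1 - j)))
      ≤ exp (-2 * y * N) * (exp (-y * N * j) + exp (-y * N * (N - j))) := by
  rw [mul_add, ← exp_add, ← exp_add]
  rcases le_total (2 * j) N with h | h
  · refine (exp_le_exp.2 ?_).trans (le_add_of_nonneg_right (exp_pos _).le)
    nlinarith [mul_nonneg hy (mul_nonneg hj (sub_nonneg.2 h))]
  · refine (exp_le_exp.2 ?_).trans (le_add_of_nonneg_left (exp_pos _).le)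
    nlinarith [mul_nonneg hy (mul_nonneg (sub_nonneg.2 hjN) (sub_nonneg.2 h))]

lemma sum_powerset_pow_add_pow {α R : Type*} [CommSemiring R] (s : Finset α) (r : R) :
    ∑ t ∈ s.powerset, (r ^ #t + r ^ (#s - #t)) = 2 * (1 + r) ^ #s := by
  have h₁ := sum_pow_mul_eq_add_pow r 1 s
  have h₂ := sum_pow_mul_eq_add_pow 1 r s
  simp only [one_pow, mul_one, one_mul] at h₁ h₂
  rw [sum_add_distrib, h₁, h₂, add_comm r]
  ring

section Cut

variable {V Ω : Type*} [Fintype V] [DecidableEq V] {s t : V}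

def stCuts (s t : V) : Finset (Finset V) := univ.filter fun S ↦ s ∈ S ∧ t ∉ S

lemma mem_stCuts {S : Finset V} : S ∈ stCuts s t ↔ s ∈ S ∧ t ∉ S := by
  simp [stCuts]

lemma stCuts_eq_image (hst : s ≠ t) :
    stCuts s t = (univ \ {s, t}).powerset.image (insert s) := by
  ext S
  simp only [mem_stCuts, mem_image, mem_powerset]
  constructor
  · rintro ⟨hs, ht⟩
    refine ⟨S.erase s, fun a ha ↦ ?_, insert_erase hs⟩
    simp only [mem_erase] at ha
    simp only [mem_sdiff, mem_univ, mem_insert, mem_singleton, true_and]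
    rintro (rfl | rfl)
    exacts [ha.1 rfl, ht ha.2]
  · rintro ⟨T, hT, rfl⟩
    refine ⟨mem_insert_self s T, ?_⟩
    simp only [mem_insert, not_or]
    exact ⟨hst.symm, fun h ↦ by simpa using hT h⟩

lemma sum_stCuts {M : Type*} [AddCommMonoid M] (hst : s ≠ t) (f : Finset V → M) :
    ∑ S ∈ stCuts s t, f S = ∑ T ∈ (univ \ {s, t}).powerset, f (insert s T) := by
  rw [stCuts_eq_image hst, sum_image]
  intro T₁ h₁ T₂ h₂ h
  have hs : ∀ T ∈ ((univ \ {s, t}).powerset : Set (Finset V)), s ∉ T :=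
    fun T hT hs ↦ by simpa using (mem_powerset.1 hT) hs
  rw [← erase_insert (hs T₁ h₁), h, erase_insert (hs T₂ h₂)]

lemma stCuts_nonempty (hst : s ≠ t) : (stCuts s t).Nonempty :=
  ⟨{s}, mem_stCuts.2 ⟨mem_singleton_self s, by simpa using hst.symm⟩⟩

lemma sInf_cutValues_eq_inf' (hst : s ≠ t) (f : Finset V → ℝ) :
    sInf {x : ℝ | ∃ S : Finset V, s ∈ S ∧ t ∉ S ∧ x = f S}
      = (stCuts s t).inf' (stCuts_nonempty hst) f := by
  rw [inf'_eq_csInf_image]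
  congr 1
  ext x
  simp [mem_stCuts, eq_comm, and_assoc]

lemma cutCap_nonneg {C : V → V → Ω → ℝ} (h01 : ∀ a b ω, C a b ω = 0 ∨ C a b ω = 1)
    (S : Finset V) (ω : Ω) : 0 ≤ cutCap C S ω :=
  sum_nonneg fun a _ ↦ sum_nonneg fun b _ ↦ by rcases h01 a b ω with h | h <;> simp [h]

lemma cutCap_eq_sum_crossing (C : V → V → Ω → ℝ) (S : Finset V) (ω : Ω) :
    cutCap C S ω = ∑ p : (S ×ˢ Sᶜ : Finset (V × V)), C (p : V × V).1 (p : V × V).2 ω := by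
  rw [cutCap, ← sum_product', sum_coe_sort (S ×ˢ Sᶜ) fun p ↦ C p.1 p.2 ω]

lemma sum_stCuts_exp_le (hst : s ≠ t) {y : ℝ} (hy : 0 ≤ y) :
    ∑ S ∈ stCuts s t, exp (-2 * y * (#S * #Sᶜ))
      ≤ 2 * exp (-2 * y * (Fintype.card V - 2))
          * (1 + exp (-y * (Fintype.card V - 2))) ^ (Fintype.card V - 2) := by
  set W : Finset V := univ \ {s, t}
  have hW : #W + 2 = Fintype.card V := by
    rw [← card_pair hst, card_sdiff_add_card_eq_card (subset_univ _), card_univ]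
  have hWV : Fintype.card V - 2 = #W := by omega
  have hWV' : (Fintype.card V : ℝ) - 2 = #W := by rw [← hW]; push_cast; ring
  rw [hWV, hWV', sum_stCuts hst, mul_comm 2, mul_assoc, ← sum_powerset_pow_add_pow, mul_sum]
  refine sum_le_sum fun T hT ↦ ?_
  have hTW : T ⊆ W := mem_powerset.1 hT
  have hsT : s ∉ T := fun h ↦ by simpa [W] using hTW h
  have hTW' : #T ≤ #W := card_le_card hTW
  have hS : (#(insert s T) : ℝ) = #T + 1 := by rw [card_insert_of_notMem hsT]; push_cast; ring
  have hSc : (#(insert s T)ᶜ : ℝ) = #W + 1 - #T := by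
    rw [card_compl, card_insert_of_notMem hsT, ← hW, show #W + 2 - (#T + 1) = #W + 1 - #T by omega,
      Nat.cast_sub (by omega)]
    push_cast
    ring
  rw [hS, hSc, ← exp_nat_mul, ← exp_nat_mul, Nat.cast_sub hTW']
  refine (exp_neg_two_mul_succ_mul_le hy (Nat.cast_nonneg #T) (Nat.cast_le.2 hTW')).trans_eq ?_
  ring_nf

end Cut

section CutProbability

variable {V Ω : Type*} [Fintype V] [DecidableEq V] [MeasureSpace Ω]
  [IsProbabilityMeasure (volume : Measure Ω)] {C : V → V → Ω → ℝ} {lam : ℝ}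

lemma lam_mul_card_le_integral_cutCap (hmeas : ∀ a b, Measurable (C a b))
    (h01 : ∀ a b ω, C a b ω = 0 ∨ C a b ω = 1)
    (hlow : ∀ a b : V, a ≠ b → ENNReal.ofReal lam ≤ volume {ω | C a b ω = 1})
    (S : Finset V) : lam * (#S * #Sᶜ) ≤ ∫ ω, cutCap C S ω := by
  have hint : ∀ a b, Integrable (C a b) :=
    fun a b ↦ .of_mem_Icc 0 1 (hmeas a b).aemeasurable
      (ae_of_all _ fun ω ↦ mem_Icc_of_zero_or_one (h01 a b ω))
  have hmean : ∀ a ∈ S, ∀ b ∈ Sᶜ, lam ≤ ∫ ω, C a b ω := fun a ha b hb ↦ by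
    rw [integral_eq_measureReal_of_zero_or_one (hmeas a b) (h01 a b), measureReal_def,
      ← ENNReal.ofReal_le_iff_le_toReal (measure_ne_top _ _)]
    exact hlow a b fun hab ↦ mem_compl.1 hb (hab ▸ ha)
  calc lam * (#S * #Sᶜ) = ∑ a ∈ S, ∑ b ∈ Sᶜ, lam := by
        simp only [sum_const, nsmul_eq_mul]; ring
    _ ≤ ∑ a ∈ S, ∑ b ∈ Sᶜ, ∫ ω, C a b ω := sum_le_sum fun a ha ↦ sum_le_sum (hmean a ha)
    _ = ∫ ω, cutCap C S ω := by
      simp only [cutCap]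
      rw [integral_finsetSum _ fun a _ ↦ integrable_finsetSum _ fun b _ ↦ hint a b]
      exact sum_congr rfl fun a _ ↦ (integral_finsetSum _ fun b _ ↦ hint a b).symm

lemma measureReal_cutCap_le_le (hmeas : ∀ a b, Measurable (C a b))
    (h01 : ∀ a b ω, C a b ω = 0 ∨ C a b ω = 1)
    (hlow : ∀ a b : V, a ≠ b → ENNReal.ofReal lam ≤ volume {ω | C a b ω = 1}) (hlam : 0 ≤ lam)
    {S : Finset V}
    (hind : iIndepFun (fun p : (S ×ˢ Sᶜ : Finset (V × V)) ↦ C (p : V × V).1 (p : V × V).2) volume)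
    {ε : ℝ} (hε : 0 ≤ ε) :
    volume.real {ω | cutCap C S ω ≤ (1 - ε) * ∫ ω, cutCap C S ω}
      ≤ exp (-2 * ε ^ 2 * lam ^ 2 * (#S * #Sᶜ)) := by
  set m : ℝ := #S * #Sᶜ
  set E := ∫ ω, cutCap C S ω
  have hE : lam * m ≤ E := lam_mul_card_le_integral_cutCap hmeas h01 hlow S
  have hcard : (#(univ : Finset (S ×ˢ Sᶜ : Finset (V × V))) : ℝ) = m := by
    simp [m, card_product]
  have hsum : E = ∑ p : (S ×ˢ Sᶜ : Finset (V × V)), ∫ ω, C (p : V × V).1 (p : V × V).2 ω := by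
    simp only [E, cutCap_eq_sum_crossing]
    exact integral_finsetSum _ fun _ _ ↦ .of_mem_Icc 0 1 (hmeas _ _).aemeasurable
      (ae_of_all _ fun ω ↦ mem_Icc_of_zero_or_one (h01 _ _ ω))
  have hoeff := measureReal_sum_le_sum_integral_sub_le hind (fun _ ↦ (hmeas _ _).aemeasurable)
    (a := 0) (b := 1) (fun _ ↦ ae_of_all _ fun ω ↦ mem_Icc_of_zero_or_one (h01 _ _ ω))
    univ (mul_nonneg hε ((mul_nonneg hlam (by positivity)).trans hE))
  rw [← hsum, hcard, sub_zero, one_pow, mul_one] at hoeff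
  calc volume.real {ω | cutCap C S ω ≤ (1 - ε) * E}
      = volume.real {ω | ∑ p : (S ×ˢ Sᶜ : Finset (V × V)), C (p : V × V).1 (p : V × V).2 ω
          ≤ E - ε * E} := by simp_rw [cutCap_eq_sum_crossing, sub_mul, one_mul]
    _ ≤ exp (-2 * (ε * E) ^ 2 / m) := hoeff
    _ ≤ exp (-2 * ε ^ 2 * lam ^ 2 * m) := by
      rcases (show 0 ≤ m by positivity).eq_or_lt with hm | hm
      · simp [← hm]
      rw [exp_le_exp, div_le_iff₀ hm]
      have hsq : (lam * m) ^ 2 ≤ E ^ 2 := pow_le_pow_left₀ (by positivity) hE 2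
      nlinarith [mul_le_mul_of_nonneg_left hsq (sq_nonneg ε)]

lemma integral_cutCap_pos (hmeas : ∀ a b, Measurable (C a b))
    (h01 : ∀ a b ω, C a b ω = 0 ∨ C a b ω = 1)
    (hlow : ∀ a b : V, a ≠ b → ENNReal.ofReal lam ≤ volume {ω | C a b ω = 1}) (hlam : 0 < lam)
    {s t : V} {S : Finset V} (hS : S ∈ stCuts s t) : 0 < ∫ ω, cutCap C S ω := by
  obtain ⟨hs, ht⟩ := mem_stCuts.1 hS
  have hSpos : 0 < #S := card_pos.2 ⟨s, hs⟩
  have hScpos : 0 < #Sᶜ := card_pos.2 ⟨t, mem_compl.2 ht⟩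
  exact (by positivity : 0 < lam * (#S * #Sᶜ)).trans_le
    (lam_mul_card_le_integral_cutCap hmeas h01 hlow S)

end CutProbability

theorem stmt_3_general {V Ω : Type*} [Fintype V] [DecidableEq V] [MeasureSpace Ω]
    [IsProbabilityMeasure (volume : Measure Ω)]
    (n : ℕ) (hn : Fintype.card V = n)
    (s t : V) (hst : s ≠ t)
    (lam : ℝ) (hlam0 : 0 < lam)
    (C : V → V → Ω → ℝ)
    (hmeas : ∀ a b, Measurable (C a b))
    (h01 : ∀ a b ω, C a b ω = 0 ∨ C a b ω = 1)
    (hlow : ∀ a b : V, a ≠ b → ENNReal.ofReal lam ≤ volume {ω | C a b ω = 1})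
    (hindep : IndepInCut C s t)
    (cmin : ℝ)
    (hcmin : cmin = sInf {x : ℝ | ∃ S : Finset V, s ∈ S ∧ t ∉ S ∧
        x = ∫ ω, cutCap C S ω})
    (ε : ℝ) (hε : 0 < ε) :
    volume {ω | sInf {x : ℝ | ∃ S : Finset V, s ∈ S ∧ t ∉ S ∧ x = cutCap C S ω}
          ≤ (1 - ε) * cmin}
      ≤ ENNReal.ofReal (2 * Real.exp (-2 * ε ^ 2 * lam ^ 2 * ((n : ℝ) - 2)) *
          (1 + Real.exp (-(ε ^ 2) * lam ^ 2 * ((n : ℝ) - 2))) ^ (n - 2)) := by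
  subst hn
  simp only [sInf_cutValues_eq_inf' hst] at hcmin ⊢
  have hcmin_pos : 0 < cmin :=
    hcmin ▸ (lt_inf'_iff _).2 fun S hS ↦ integral_cutCap_pos hmeas h01 hlow hlam0 hS
  set event : Finset V → Set Ω := fun S ↦ {ω | cutCap C S ω ≤ (1 - ε) * ∫ ω, cutCap C S ω}
  have hsub : {ω | (stCuts s t).inf' (stCuts_nonempty hst) (fun S ↦ cutCap C S ω)
      ≤ (1 - ε) * cmin} ⊆ ⋃ S ∈ stCuts s t, event S := by
    intro ω hω
    obtain ⟨S, hS, hle⟩ := (inf'_le_iff _).1 (Set.mem_ofPred.1 hω)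
    have hε1 : 0 ≤ 1 - ε :=
      nonneg_of_mul_nonneg_left ((cutCap_nonneg h01 S ω).trans hle) hcmin_pos
    exact Set.mem_biUnion hS (hle.trans (mul_le_mul_of_nonneg_left (hcmin ▸ inf'_le _ hS) hε1))
  rw [← ofReal_measureReal]
  refine ENNReal.ofReal_le_ofReal ?_
  calc volume.real _ ≤ volume.real (⋃ S ∈ stCuts s t, event S) :=
        measureReal_mono hsub (measure_ne_top _ _)
    _ ≤ ∑ S ∈ stCuts s t, volume.real (event S) := measureReal_biUnion_finset_le _ _
    _ ≤ ∑ S ∈ stCuts s t, exp (-2 * (ε ^ 2 * lam ^ 2) * (#S * #Sᶜ)) := by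
      refine sum_le_sum fun S hS ↦ ?_
      obtain ⟨hs, ht⟩ := mem_stCuts.1 hS
      refine (measureReal_cutCap_le_le hmeas h01 hlow hlam0.le (hindep S hs ht) hε.le).trans_eq ?_
      ring_nf
    _ ≤ _ := (sum_stCuts_exp_le hst (by positivity)).trans_eq (by ring_nf)

/-- paper's Corollary 5. With `c_min` the minimum expected cut value and
`C_{s;t}` the (random) minimum cut between `s` and `t`,
`P(C_{s;t} ≤ (1-ε) c_min) ≤ 2 exp(-2 ε² λ² (n-2)) (1 + exp(-ε² λ² (n-2)))^{n-2}`. -/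
theorem stmt_3 {V Ω : Type*} [Fintype V] [DecidableEq V] [MeasureSpace Ω]
    [IsProbabilityMeasure (volume : Measure Ω)]
    (n : ℕ) (hn : Fintype.card V = n) (hn4 : 4 ≤ n)
    (s t : V) (hst : s ≠ t)
    (lam : ℝ) (hlam0 : 0 < lam) (hlam1 : lam ≤ 1)
    (C : V → V → Ω → ℝ)
    (hsymm : ∀ a b, C a b = C b a)
    (hmeas : ∀ a b, Measurable (C a b))
    (h01 : ∀ a b ω, C a b ω = 0 ∨ C a b ω = 1)
    (hlow : ∀ a b : V, a ≠ b → ENNReal.ofReal lam ≤ volume {ω | C a b ω = 1})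
    (hindep : IndepInCut C s t)
    (cmin : ℝ)
    (hcmin : cmin = sInf {x : ℝ | ∃ S : Finset V, s ∈ S ∧ t ∉ S ∧
        x = ∫ ω, cutCap C S ω})
    (ε : ℝ) (hε : 0 < ε) :
    volume {ω | sInf {x : ℝ | ∃ S : Finset V, s ∈ S ∧ t ∉ S ∧ x = cutCap C S ω}
          ≤ (1 - ε) * cmin}
      ≤ ENNReal.ofReal (2 * Real.exp (-2 * ε ^ 2 * lam ^ 2 * ((n : ℝ) - 2)) *
          (1 + Real.exp (-(ε ^ 2) * lam ^ 2 * ((n : ℝ) - 2))) ^ (n - 2)) :=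
  stmt_3_general n hn s t hst lam hlam0 C hmeas h01 hlow hindep cmin hcmin ε hε
end

section
/- Let n ≥ 5 be an integer, let k be an even integer with 2 ≤ k ≤ n−3, and let p ∈ [0,1]. On the vertex set {0,1,…,n−1} assign to each unordered pair {i,j} of distinct vertices the weight w(i,j) = 1 if the ring distance satisfies d(i,j) ≤ k/2, and w(i,j) = p if d(i,j) > k/2. Then for any two distinct vertices s and t, the minimum over all subsets S with s ∈ S and t ∉ S of the cut weight Σ_{i ∈ S, j ∉ S} w(i,j) equals k + (n−1−k)·p. -/
open Finset

/-- The ring distance on vertices `{0, …, n-1}` arranged on a cycle: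
`d(i,j) = min(|i-j|, n - |i-j|)`. -/
def ringDist (n : ℕ) (i j : Fin n) : ℕ :=
  min (Nat.dist i.val j.val) (n - Nat.dist i.val j.val)

/-- Expected-capacity weights of the small-world network with shortcuts:
lattice pairs (ring distance at most `k/2`) have weight `1`, other pairs weight `p`. -/
noncomputable def shortcutWeight (n k : ℕ) (p : ℝ) (i j : Fin n) : ℝ :=
  if ringDist n i j ≤ k / 2 then 1 else p

/-!
Write `m = k / 2`. The weight of the cut `(S, Sᶜ)` is `L + (|S| |Sᶜ| - L) p`, where `L` counts
the crossing lattice pairs. Since `|S| |Sᶜ| ≥ n - 1` and `p ≤ 1`, it suffices that `L ≥ 2m = k`,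
with equality for `S = {s}`; this is the edge-connectivity of the circulant graph with offsets
`±1, …, ±m`. Grouping crossing pairs by their offset `v`, `L` is the sum over the offsets of the
number of `i ∈ S` with `i + v ∉ S`. For the offsets `v • g`, `1 ≤ v ≤ m`, where `g = ±1`, this
number vanishes exactly when `d ∣ v`, with `d ≥ 2` the order of `g` modulo the stabilizer `H`
of `S`; when `d ≤ m`, the nonzero ones are at least `2`, being unions of cosets of `H ∋ d • g`.
Either way the `m` offsets contribute at least `m`.
-/

open Pointwise

section ShiftBoundary

variable {G : Type*} [AddCommGroup G] [DecidableEq G] {S : Finset G} {a b : G}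

def shiftBoundary (S : Finset G) (a : G) : Finset G := {i ∈ S | i + a ∉ S}

lemma mem_stabilizer_iff_forall_add_mem :
    a ∈ AddAction.stabilizer G S ↔ ∀ i ∈ S, i + a ∈ S := by
  rw [AddAction.mem_stabilizer_iff]
  refine ⟨fun h i hi => ?_, fun h => ?_⟩
  · rw [add_comm, ← h]
    exact vadd_mem_vadd_finset hi
  · refine eq_of_subset_of_card_le (fun j hj => ?_) (card_vadd_finset a S).ge
    obtain ⟨i, hi, rfl⟩ := mem_vadd_finset.mp hj
    simpa [add_comm] using h i hi

lemma shiftBoundary_nonempty_iff :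
    (shiftBoundary S a).Nonempty ↔ a ∉ AddAction.stabilizer G S := by
  rw [mem_stabilizer_iff_forall_add_mem]
  simp [shiftBoundary, filter_nonempty_iff]

lemma add_mem_shiftBoundary {i : G} (hb : b ∈ AddAction.stabilizer G S)
    (hi : i ∈ shiftBoundary S a) : i + b ∈ shiftBoundary S a := by
  rw [shiftBoundary, mem_filter] at hi ⊢
  refine ⟨mem_stabilizer_iff_forall_add_mem.mp hb i hi.1, fun h => hi.2 ?_⟩
  simpa [add_right_comm] using
    mem_stabilizer_iff_forall_add_mem.mp (neg_mem hb) _ h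

lemma two_le_card_shiftBoundary (ha : a ∉ AddAction.stabilizer G S)
    (hb : b ∈ AddAction.stabilizer G S) (hb0 : b ≠ 0) : 2 ≤ #(shiftBoundary S a) := by
  obtain ⟨i, hi⟩ := shiftBoundary_nonempty_iff.mpr ha
  exact one_lt_card.mpr ⟨i, hi, i + b, add_mem_shiftBoundary hb hi, left_ne_add.mpr hb0⟩

lemma le_sum_card_shiftBoundary_nsmul {g : G} {m : ℕ} (hg : g ∉ AddAction.stabilizer G S)
    (hm : m < addOrderOf g) : m ≤ ∑ v ∈ Ioc 0 m, #(shiftBoundary S (v • g)) := by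
  set H := AddAction.stabilizer G S
  set d := addOrderOf (g : G ⧸ H)
  have hmem : ∀ v : ℕ, v • g ∈ H ↔ d ∣ v := fun v => by
    rw [addOrderOf_dvd_iff_nsmul_eq_zero, ← QuotientAddGroup.mk_nsmul,
      QuotientAddGroup.eq_zero_iff]
  have hd1 : d ≠ 1 := fun h => hg (by simpa using (hmem 1).mpr (h ▸ dvd_rfl))
  have hd0 : 0 < d := Nat.pos_of_dvd_of_pos (addOrderOf_map_dvd (QuotientAddGroup.mk' H) g)
    (by omega)
  have hpos : ∀ v ∈ Ioc 0 m, ¬ d ∣ v → 1 ≤ #(shiftBoundary S (v • g)) := fun v _ hv =>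
    card_pos.mpr (shiftBoundary_nonempty_iff.mpr (mt (hmem v).mp hv))
  by_cases hdm : d ≤ m
  · have htwo : ∀ v ∈ Ioc 0 m, ¬ d ∣ v → 2 ≤ #(shiftBoundary S (v • g)) := fun v _ hv =>
      two_le_card_shiftBoundary (mt (hmem v).mp hv) ((hmem d).mpr dvd_rfl)
        (nsmul_ne_zero_of_lt_addOrderOf hd0.ne' (hdm.trans_lt hm))
    have hcard : #{v ∈ Ioc 0 m | ¬ d ∣ v} = m - m / d := by
      have := card_filter_add_card_filter_not (s := Ioc 0 m) (p := (d ∣ ·))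
      rw [Nat.Ioc_filter_dvd_card_eq_div, Nat.card_Ioc] at this
      omega
    have hdiv : m / d ≤ m / 2 := Nat.div_le_div_left (by omega) zero_lt_two
    calc m ≤ #{v ∈ Ioc 0 m | ¬ d ∣ v} • 2 := by rw [hcard, smul_eq_mul]; omega
      _ ≤ ∑ v ∈ Ioc 0 m with ¬ d ∣ v, #(shiftBoundary S (v • g)) :=
        card_nsmul_le_sum _ _ _ fun v hv => htwo v (mem_filter.mp hv).1 (mem_filter.mp hv).2
      _ ≤ ∑ v ∈ Ioc 0 m, #(shiftBoundary S (v • g)) := sum_le_sum_of_subset (filter_subset _ _)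
  · calc m = #(Ioc 0 m) • 1 := by simp
      _ ≤ ∑ v ∈ Ioc 0 m, #(shiftBoundary S (v • g)) := card_nsmul_le_sum _ _ _ fun v hv =>
        hpos v hv (Nat.not_dvd_of_pos_of_lt (mem_Ioc.mp hv).1
          ((mem_Ioc.mp hv).2.trans_lt (not_le.mp hdm)))

lemma shiftBoundary_singleton (s : G) (ha : a ≠ 0) : shiftBoundary {s} a = {s} := by
  simp [shiftBoundary, filter_singleton, ha]

variable [Fintype G]

lemma card_filter_sub_mem_eq_sum_card_shiftBoundary (S C : Finset G) :
    #{q ∈ S ×ˢ Sᶜ | q.2 - q.1 ∈ C} = ∑ a ∈ C, #(shiftBoundary S a) := by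
  rw [card_eq_sum_card_fiberwise (s := {q ∈ S ×ˢ Sᶜ | q.2 - q.1 ∈ C})
    (f := fun q => q.2 - q.1) fun q hq => (mem_filter.mp hq).2]
  refine sum_congr rfl fun a ha => card_nbij' Prod.fst (fun i => (i, i + a)) ?_ ?_ ?_ ?_
  · rintro ⟨i, j⟩ hq
    simp only [coe_filter, mem_filter, mem_product, mem_compl, Set.mem_ofPred_eq] at hq
    simp [shiftBoundary, hq.1.1.1, hq.1.1.2, ← hq.2]
  · intro i hi
    rw [mem_coe, shiftBoundary, mem_filter] at hi
    simp [hi, ha]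
  · rintro ⟨i, j⟩ hq
    simp only [coe_filter, mem_filter, Set.mem_ofPred_eq] at hq
    simp [← hq.2]
  · intro i _
    rfl

end ShiftBoundary

section RingLattice

open scoped Fin.NatCast

variable {n m : ℕ}

lemma ringDist_eq_min_val_sub (i j : Fin n) :
    ringDist n i j = min (j - i).val (n - (j - i).val) := by
  rcases le_or_gt i j with h | h
  · rw [ringDist, Fin.coe_sub_iff_le.mpr h, Nat.dist_eq_sub_of_le h]
  · rw [ringDist, Fin.coe_sub_iff_lt.mpr h, Nat.dist_eq_sub_of_le_right h.le]
    have := i.isLt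
    omega

variable [NeZero n]

lemma Fin.addOrderOf_one : addOrderOf (1 : Fin n) = n := by
  refine (addOrderOf_eq_iff (NeZero.pos n)).mpr
    ⟨by rw [nsmul_one, Fin.natCast_self], fun v hv hv0 => ?_⟩
  rw [nsmul_one, ne_eq, Fin.ext_iff, Fin.val_cast_of_lt hv]
  simpa using hv0.ne'

lemma one_notMem_stabilizer {S : Finset (Fin n)} (hS : S.Nonempty) (hSc : Sᶜ.Nonempty) :
    (1 : Fin n) ∉ AddAction.stabilizer (Fin n) S := by
  intro h
  obtain ⟨s, hs⟩ := hS
  obtain ⟨t, ht⟩ := hSc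
  have hts : t - s ∈ AddAction.stabilizer (Fin n) S := by
    simpa [nsmul_one, Fin.cast_val_eq_self] using nsmul_mem h (t - s).val
  simpa [mem_compl.mp ht] using mem_stabilizer_iff_forall_add_mem.mp hts s hs

def latticeOffsets (n m : ℕ) [NeZero n] : Finset (Fin n) :=
  (Ioc 0 m).image (fun v : ℕ => (v : Fin n)) ∪ (Ioc 0 m).image (fun v : ℕ => -(v : Fin n))

lemma val_neg_natCast {v : ℕ} (hv0 : 0 < v) (hv : v < n) : (-(v : Fin n)).val = n - v := by
  rw [Fin.val_neg', Fin.val_cast_of_lt hv, Nat.mod_eq_of_lt (by omega)]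

lemma mem_latticeOffsets (hm : m < n) {a : Fin n} :
    a ∈ latticeOffsets n m ↔ a ≠ 0 ∧ min a.val (n - a.val) ≤ m := by
  simp only [latticeOffsets, mem_union, mem_image, mem_Ioc, ne_eq, Fin.ext_iff, Fin.val_zero]
  constructor
  · rintro (⟨v, hv, hva⟩ | ⟨v, hv, hva⟩) <;> rw [← hva]
    · rw [Fin.val_cast_of_lt (by omega)]
      omega
    · rw [val_neg_natCast hv.1 (by omega)]
      omega
  · rintro ⟨h0, hle⟩
    by_cases ha : a.val ≤ m
    · exact Or.inl ⟨a.val, ⟨by omega, ha⟩, Fin.val_cast_of_lt a.isLt⟩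
    · refine Or.inr ⟨n - a.val, ⟨by omega, by omega⟩, ?_⟩
      rw [val_neg_natCast (by omega) (by omega)]
      omega

lemma sum_latticeOffsets {M : Type*} [AddCommMonoid M] (h : 2 * m < n) (f : Fin n → M) :
    ∑ a ∈ latticeOffsets n m, f a =
      ∑ v ∈ Ioc 0 m, f (v : Fin n) + ∑ v ∈ Ioc 0 m, f (-(v : Fin n)) := by
  have hval : ∀ v ∈ Ioc 0 m, (v : Fin n).val = v := fun v hv =>
    Fin.val_cast_of_lt (by rw [mem_Ioc] at hv; omega)
  have hinj : Set.InjOn (fun v : ℕ => (v : Fin n)) (Ioc 0 m) := fun v hv w hw hvw => by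
    simpa [hval v hv, hval w hw] using congrArg Fin.val hvw
  have hinj' : Set.InjOn (fun v : ℕ => -(v : Fin n)) (Ioc 0 m) := fun v hv w hw hvw =>
    hinj hv hw (neg_inj.mp hvw)
  rw [latticeOffsets, sum_union, sum_image hinj, sum_image hinj']
  refine disjoint_left.mpr fun a ha ha' => ?_
  obtain ⟨v, hv, rfl⟩ := mem_image.mp ha
  obtain ⟨w, hw, hvw⟩ := mem_image.mp ha'
  have := congrArg Fin.val hvw
  rw [mem_Ioc] at hv hw
  rw [val_neg_natCast hw.1 (by omega), Fin.val_cast_of_lt (by omega)] at this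
  omega

lemma card_latticeOffsets (h : 2 * m < n) : #(latticeOffsets n m) = 2 * m := by
  rw [card_eq_sum_ones, sum_latticeOffsets h (fun _ => 1)]
  simp [two_mul]

lemma card_latticeCut_eq_sum (hm : m < n) (S : Finset (Fin n)) :
    #{q ∈ S ×ˢ Sᶜ | ringDist n q.1 q.2 ≤ m} =
      ∑ a ∈ latticeOffsets n m, #(shiftBoundary S a) := by
  rw [← card_filter_sub_mem_eq_sum_card_shiftBoundary]
  congr 1
  refine filter_congr fun q hq => ?_
  obtain ⟨h1, h2⟩ := mem_product.mp hq
  have hne : q.2 - q.1 ≠ 0 := sub_ne_zero.mpr fun h => mem_compl.mp h2 (h ▸ h1)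
  rw [mem_latticeOffsets hm, ringDist_eq_min_val_sub]
  exact ⟨fun h => ⟨hne, h⟩, And.right⟩

lemma card_latticeCut_singleton (h : 2 * m < n) (s : Fin n) :
    #{q ∈ {s} ×ˢ {s}ᶜ | ringDist n q.1 q.2 ≤ m} = 2 * m := by
  rw [card_latticeCut_eq_sum (by omega), ← card_latticeOffsets h, card_eq_sum_ones]
  refine sum_congr rfl fun a ha => ?_
  rw [shiftBoundary_singleton s ((mem_latticeOffsets (by omega)).mp ha).1, card_singleton]

lemma two_mul_le_card_latticeCut (h : 2 * m < n) {S : Finset (Fin n)} (hS : S.Nonempty)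
    (hSc : Sᶜ.Nonempty) : 2 * m ≤ #{q ∈ S ×ˢ Sᶜ | ringDist n q.1 q.2 ≤ m} := by
  have hg := one_notMem_stabilizer hS hSc
  have hforward := le_sum_card_shiftBoundary_nsmul (m := m) (g := (1 : Fin n)) hg
    (by rw [Fin.addOrderOf_one]; omega)
  have hbackward := le_sum_card_shiftBoundary_nsmul (m := m) (g := (-1 : Fin n))
    (by simpa using hg) (by rw [addOrderOf_neg, Fin.addOrderOf_one]; omega)
  simp only [nsmul_one, smul_neg] at hforward hbackward
  rw [card_latticeCut_eq_sum (by omega), sum_latticeOffsets h]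
  omega

end RingLattice

lemma sum_sum_shortcutWeight {n k : ℕ} (p : ℝ) (A B : Finset (Fin n)) :
    ∑ i ∈ A, ∑ j ∈ B, shortcutWeight n k p i j =
      #{q ∈ A ×ˢ B | ringDist n q.1 q.2 ≤ k / 2} +
        (#A * #B - #{q ∈ A ×ˢ B | ringDist n q.1 q.2 ≤ k / 2} : ℝ) * p := by
  have hsplit := card_filter_add_card_filter_not (s := A ×ˢ B)
    (p := fun q : Fin n × Fin n => ringDist n q.1 q.2 ≤ k / 2)
  rw [card_product] at hsplit
  rw [← sum_product' (f := fun i j => shortcutWeight n k p i j), ← Nat.cast_mul, ← hsplit]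
  simp only [shortcutWeight, sum_ite, sum_const, nsmul_eq_mul, mul_one]
  push_cast
  ring

theorem stmt_7_general (n k : ℕ) (hk : k ≤ n - 3) (hke : Even k)
    (p : ℝ) (hp0 : 0 ≤ p) (hp1 : p ≤ 1)
    (s t : Fin n) (hst : s ≠ t) :
    IsLeast {x : ℝ | ∃ S : Finset (Fin n), s ∈ S ∧ t ∉ S ∧
        x = ∑ i ∈ S, ∑ j ∈ Sᶜ, shortcutWeight n k p i j}
      ((k : ℝ) + ((n : ℝ) - 1 - (k : ℝ)) * p) := by
  have : NeZero n := NeZero.of_pos s.pos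
  obtain ⟨m, rfl⟩ := hke
  have hm : (m + m) / 2 = m := by omega
  have hmn : 2 * m < n := by omega
  refine ⟨⟨{s}, mem_singleton_self s, by simpa using hst.symm, ?_⟩, ?_⟩
  · rw [sum_sum_shortcutWeight, hm, card_latticeCut_singleton hmn, card_singleton, card_compl,
      card_singleton, Fintype.card_fin, Nat.cast_sub (by omega)]
    push_cast
    ring
  · rintro _ ⟨S, hs, ht, rfl⟩
    have hS : S.Nonempty := ⟨s, hs⟩
    have hSc : Sᶜ.Nonempty := ⟨t, mem_compl.mpr ht⟩
    have hcut : (2 * m : ℝ) ≤ #{q ∈ S ×ˢ Sᶜ | ringDist n q.1 q.2 ≤ m} := by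
      exact_mod_cast two_mul_le_card_latticeCut hmn hS hSc
    have hsize : (n : ℝ) - 1 ≤ #S * #Sᶜ := by
      have hsum : (#S + #Sᶜ : ℝ) = n := by
        exact_mod_cast (card_add_card_compl S).trans (Fintype.card_fin n)
      have h1 : (1 : ℝ) ≤ #S := by exact_mod_cast hS.card_pos
      have h2 : (1 : ℝ) ≤ #Sᶜ := by exact_mod_cast hSc.card_pos
      nlinarith
    rw [sum_sum_shortcutWeight, hm]
    push_cast
    nlinarith [mul_le_mul_of_nonneg_right hcut (sub_nonneg.mpr hp1),
      mul_le_mul_of_nonneg_right hsize hp0]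

/-- the computation of `c_min` in the paper's Theorem 2.
In the expected-capacity graph of the small-world network with shortcuts, the minimum
`s`-`t` cut weight equals `k + (n-1-k) p`, for any distinct `s`, `t`. -/
theorem stmt_7 (n k : ℕ) (hn : 5 ≤ n) (hk2 : 2 ≤ k) (hk : k ≤ n - 3) (hke : Even k)
    (p : ℝ) (hp0 : 0 ≤ p) (hp1 : p ≤ 1)
    (s t : Fin n) (hst : s ≠ t) :
    IsLeast {x : ℝ | ∃ S : Finset (Fin n), s ∈ S ∧ t ∉ S ∧
        x = ∑ i ∈ S, ∑ j ∈ Sᶜ, shortcutWeight n k p i j}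
      ((k : ℝ) + ((n : ℝ) - 1 - (k : ℝ)) * p) :=
  stmt_7_general n k hk hke p hp0 hp1 s t hst
end
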